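/- For p > 0, the function ε₃ = (p² e^p/(e^p - 1)²) ε₃', where ε₃' is defined piecewise by (e^{px} + e^{-px} - 2)/(2p²) on [0,1], (e^p + e^{-p})/p² - (1+e^{-p})e^{p(x-1)}/(2p²) - (1+e^p)e^{-p(x-1)}/(2p²) on [1,2], -1/p² + e^{-p}e^{p(x-2)}/(2p²) + e^p e^{-p(x-2)}/(2p²) on [2,3], and 0 elsewhere, satisfies the partition of unity ∑_{n∈ℤ} ε₃(x - n) = 1 for all x ∈ ℝ. -/

import Mathlib

/-!
Since `eps3'` vanishes outside `[0, 3]`, the sum `∑ₙ eps3' (x - n)` reduces to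
`eps3' t + eps3' (t + 1) + eps3' (t + 2)` with `t = fract x ∈ [0, 1)`. Inserting the three
pieces, the terms in `e^{±pt}` cancel and the sum is the constant `(e^p - 1)² / (p² e^p)`,
which is exactly the reciprocal of the normalising factor in `eps3`.
-/

open Set

noncomputable def eps3' (p : ℝ) : ℝ → ℝ := fun x =>
  if x ∈ Set.Icc (0 : ℝ) 1 then (Real.exp (p * x) + Real.exp (-p * x) - 2) / (2 * p ^ 2)
  else if x ∈ Set.Icc (1 : ℝ) 2 then
    (Real.exp p + Real.exp (-p)) / p ^ 2
      - (1 + Real.exp (-p)) * Real.exp (p * (x - 1)) / (2 * p ^ 2)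
      - (1 + Real.exp p) * Real.exp (-p * (x - 1)) / (2 * p ^ 2)
  else if x ∈ Set.Icc (2 : ℝ) 3 then
    -1 / p ^ 2 + Real.exp (-p) * Real.exp (p * (x - 2)) / (2 * p ^ 2)
      + Real.exp p * Real.exp (-p * (x - 2)) / (2 * p ^ 2)
  else 0

noncomputable def eps3 (p : ℝ) : ℝ → ℝ := fun x =>
  (p ^ 2 * Real.exp p / (Real.exp p - 1) ^ 2) * eps3' p x

theorem tsum_comp_sub_intCast_eq_sum_range {M : Type*} [AddCommMonoid M] [TopologicalSpace M]
    {f : ℝ → M} {N : ℕ} (hf : ∀ y : ℝ, y < 0 ∨ N ≤ y → f y = 0) (x : ℝ) :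
    ∑' n : ℤ, f (x - n) = ∑ k ∈ Finset.range N, f (Int.fract x + k) := by
  have hsupp : ∀ n ∉ (Finset.range N).image (fun k : ℕ => ⌊x⌋ - k), f (x - n) = 0 := by
    intro n hn
    simp only [Finset.mem_image, Finset.mem_range, not_exists, not_and] at hn
    apply hf
    rcases lt_or_ge ⌊x⌋ n with h | h
    · left
      have : (⌊x⌋ : ℝ) + 1 ≤ n := by exact_mod_cast h
      linarith [Int.lt_floor_add_one x]
    · right
      have hN : (N : ℤ) ≤ ⌊x⌋ - n := by
        by_contra! hlt
        exact hn (⌊x⌋ - n).toNat (by omega) (by omega)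
      have : (N : ℝ) ≤ ⌊x⌋ - n := by exact_mod_cast hN
      linarith [Int.floor_le x]
  rw [tsum_eq_sum hsupp, Finset.sum_image fun _ _ _ _ h => by simpa using h]
  refine Finset.sum_congr rfl fun k _ => congrArg f ?_
  rw [← Int.self_sub_floor]
  push_cast
  ring

section eps3'

variable (p : ℝ)

theorem eps3'_of_mem_Icc_zero_one {x : ℝ} (hx : x ∈ Icc (0 : ℝ) 1) :
    eps3' p x = (Real.exp (p * x) + Real.exp (-p * x) - 2) / (2 * p ^ 2) :=
  if_pos hx

/- The pieces of `eps3'` agree at the knots `1, 2, 3` (the spline is continuous), so each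
formula holds on the whole closed interval, whichever branch the definition picks. -/
theorem eps3'_of_mem_Icc_one_two {x : ℝ} (hx : x ∈ Icc (1 : ℝ) 2) :
    eps3' p x = (Real.exp p + Real.exp (-p)) / p ^ 2
      - (1 + Real.exp (-p)) * Real.exp (p * (x - 1)) / (2 * p ^ 2)
      - (1 + Real.exp p) * Real.exp (-p * (x - 1)) / (2 * p ^ 2) := by
  rcases eq_or_lt_of_le hx.1 with rfl | h1
  · simp only [eps3', mem_Icc, le_refl, zero_le_one, and_self, if_true, sub_self, mul_zero,
      Real.exp_zero, mul_one]
    ring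
  · exact (if_neg fun h => h1.not_ge h.2).trans (if_pos hx)

theorem eps3'_of_mem_Icc_two_three {x : ℝ} (hx : x ∈ Icc (2 : ℝ) 3) :
    eps3' p x = -1 / p ^ 2 + Real.exp (-p) * Real.exp (p * (x - 2)) / (2 * p ^ 2)
      + Real.exp p * Real.exp (-p * (x - 2)) / (2 * p ^ 2) := by
  rcases eq_or_lt_of_le hx.1 with rfl | h2
  · rw [eps3'_of_mem_Icc_one_two p ⟨by norm_num, le_rfl⟩]
    have h : Real.exp p * Real.exp (-p) = 1 := by rw [← Real.exp_add, add_neg_cancel, Real.exp_zero]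
    norm_num
    linear_combination (-(p⁻¹ ^ 2)) * h
  · exact (if_neg fun h => by linarith [h.2]).trans
      ((if_neg fun h => h2.not_ge h.2).trans (if_pos hx))

theorem eps3'_eq_zero {y : ℝ} (hy : y < 0 ∨ 3 ≤ y) : eps3' p y = 0 := by
  rcases eq_or_ne y 3 with rfl | h3
  · rw [eps3'_of_mem_Icc_two_three p ⟨by norm_num, le_rfl⟩]
    norm_num [← Real.exp_add]
    ring
  · unfold eps3'
    split_ifs <;> grind

theorem eps3'_add_eps3'_add_one_add_eps3'_add_two {t : ℝ} (ht : t ∈ Icc (0 : ℝ) 1) :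
    eps3' p t + eps3' p (t + 1) + eps3' p (t + 2)
      = (Real.exp p - 1) ^ 2 / (p ^ 2 * Real.exp p) := by
  rw [eps3'_of_mem_Icc_zero_one p ht,
    eps3'_of_mem_Icc_one_two p ⟨by linarith [ht.1], by linarith [ht.2]⟩,
    eps3'_of_mem_Icc_two_three p ⟨by linarith [ht.1], by linarith [ht.2]⟩,
    add_sub_cancel_right, add_sub_cancel_right, neg_mul, Real.exp_neg, Real.exp_neg]
  field_simp
  ring

end eps3'

theorem stmt_17 (p : ℝ) (hp : 0 < p) :
    ∀ x : ℝ, ∑' n : ℤ, eps3 p (x - n) = 1 := by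
  intro x
  have hsupp : ∀ y : ℝ, y < 0 ∨ ((3 : ℕ) : ℝ) ≤ y → eps3 p y = 0 := fun y hy => by
    rw [eps3, eps3'_eq_zero p (by exact_mod_cast hy), mul_zero]
  have hfract : Int.fract x ∈ Icc (0 : ℝ) 1 := ⟨Int.fract_nonneg x, (Int.fract_lt_one x).le⟩
  have hexp : Real.exp p - 1 ≠ 0 := sub_ne_zero.2 (Real.one_lt_exp_iff.2 hp).ne'
  rw [tsum_comp_sub_intCast_eq_sum_range hsupp, Finset.sum_range_succ, Finset.sum_range_succ,
    Finset.sum_range_one]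
  simp only [eps3, ← mul_add, Nat.cast_zero, Nat.cast_one, Nat.cast_ofNat, add_zero]
  rw [eps3'_add_eps3'_add_one_add_eps3'_add_two p hfract]
  field_simp
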